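/- arXiv:1811.06940 — 6 statements merged into one kernel-verified Lean document; each statement's English description precedes it below -/
import Mathlib

section
/- For α ∈ (1,2), with weights w_k as above, the sum ∑_{k≥2} w_{k−1}/k! equals (α−1)/(2(α+1)). Consequently, setting p(k) = (2(1+α)α/(α²+α+2))·w_{k−1}/k! for k ≥ 2 and p(1) = 2(1+α)/(α²+α+2), one has ∑_{k≥1} p(k) = 1, i.e. p defines a probability distribution on the positive integers. -/
noncomputable def marchalW (α : ℝ) : ℕ → ℝ
  | 0 => 1
  | 1 => 0
  | k => (α - 1) * ∏ j ∈ Finset.Ico 2 k, ((j : ℝ) - α)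

/-- The degree distribution `D^(α)`:
`p 1 = 2(1+α)/(α²+α+2)` and `p k = (2(1+α)α/(α²+α+2)) · w_{k-1}/k!` for `k ≥ 2`. -/
noncomputable def degreeDist (α : ℝ) (k : ℕ) : ℝ :=
  if k = 1 then 2 * (1 + α) / (α ^ 2 + α + 2)
  else if 2 ≤ k then
    (2 * (1 + α) * α / (α ^ 2 + α + 2)) * marchalW α (k - 1) / (Nat.factorial k : ℝ)
  else 0

/-!
With `r n = ∏_{j=2}^{n+1} (j - α) / (n+2)!` one has `r (n+1) = r n · (n+2-α)/(n+3)`, hence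
`w_{n+2}/(n+3)! = (α-1)/(α+1) · (r n - r (n+1))`. The series therefore telescopes to
`(α-1)/(α+1) · r 0 = (α-1)/(2(α+1))`, because `0 ≤ r n ≤ 1/(n+2)` for `0 ≤ α ≤ 2`.
The total mass of `degreeDist α` is then
`(α(α-1) + 2(1+α))/(α²+α+2) = 1`.
-/

open Finset Filter Topology

theorem hasSum_sub_succ_of_antitone {f : ℕ → ℝ} {l : ℝ} (hf : Antitone f)
    (hl : Tendsto f atTop (𝓝 l)) : HasSum (fun n => f n - f (n + 1)) (f 0 - l) := by
  rw [hasSum_iff_tendsto_nat_of_nonneg (fun n => sub_nonneg.2 (hf n.le_succ))]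
  simpa only [Finset.sum_range_sub'] using hl.const_sub (f 0)

/-- Normalised so that `w_{n+2} = (α - 1) · (n+2)! · marchalRatio α n`. -/
noncomputable def marchalRatio (α : ℝ) (n : ℕ) : ℝ :=
  (∏ j ∈ Ico 2 (n + 2), ((j : ℝ) - α)) / (n + 2).factorial

namespace marchalRatio

variable {α : ℝ}

theorem zero : marchalRatio α 0 = 1 / 2 := by
  simp [marchalRatio]

theorem succ (n : ℕ) :
    marchalRatio α (n + 1) = marchalRatio α n * ((n + 2 - α) / (n + 3)) := by
  rw [marchalRatio, marchalRatio, show n + 1 + 2 = n + 2 + 1 by ring,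
    prod_Ico_succ_top (by omega), Nat.factorial_succ]
  push_cast
  field_simp
  ring

theorem nonneg (hα : α ≤ 2) (n : ℕ) : 0 ≤ marchalRatio α n := by
  refine div_nonneg (prod_nonneg fun j hj => ?_) (Nat.cast_nonneg _)
  have : (2 : ℝ) ≤ j := by exact_mod_cast (mem_Ico.1 hj).1
  linarith

theorem le_one_div (hα₀ : 0 ≤ α) (hα₂ : α ≤ 2) (n : ℕ) :
    marchalRatio α n ≤ 1 / (n + 2) := by
  induction n with
  | zero => simp [zero]
  | succ n ih =>
    rw [succ]
    calc marchalRatio α n * ((n + 2 - α) / (n + 3))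
        ≤ 1 / (n + 2) * ((n + 2) / (n + 3)) := by
          gcongr
          · exact div_nonneg (by linarith) (by positivity)
          · linarith
      _ = 1 / ((n + 1 : ℕ) + 2) := by push_cast; field_simp; ring

theorem antitone (hα₀ : 0 ≤ α) (hα₂ : α ≤ 2) : Antitone (marchalRatio α) := by
  refine antitone_nat_of_succ_le fun n => ?_
  rw [succ]
  refine mul_le_of_le_one_right (nonneg hα₂ n) ?_
  rw [div_le_one (by positivity)]
  linarith

theorem tendsto_zero (hα₀ : 0 ≤ α) (hα₂ : α ≤ 2) :
    Tendsto (marchalRatio α) atTop (𝓝 0) :=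
  squeeze_zero (nonneg hα₂) (fun n => (le_one_div hα₀ hα₂ n).trans (by gcongr; linarith))
    tendsto_one_div_add_atTop_nhds_zero_nat

end marchalRatio

theorem marchalW_one (α : ℝ) : marchalW α 1 = 0 := rfl

theorem marchalW_add_two (α : ℝ) (n : ℕ) :
    marchalW α (n + 2) = (α - 1) * ∏ j ∈ Ico 2 (n + 2), ((j : ℝ) - α) := rfl

theorem marchalW_add_two_div_factorial {α : ℝ} (hα : α + 1 ≠ 0) (n : ℕ) :
    marchalW α (n + 2) / (n + 3).factorial
      = (α - 1) / (α + 1) * (marchalRatio α n - marchalRatio α (n + 1)) := by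
  rw [marchalRatio.succ, marchalRatio, Nat.factorial_succ (n + 2), marchalW_add_two]
  push_cast
  field_simp
  ring

theorem hasSum_marchalW_div_factorial {α : ℝ} (hα₀ : 0 ≤ α) (hα₂ : α ≤ 2) :
    HasSum (fun k : ℕ => marchalW α (k + 1) / (k + 2).factorial) ((α - 1) / (2 * (α + 1))) := by
  have htel := (hasSum_sub_succ_of_antitone (marchalRatio.antitone hα₀ hα₂)
    (marchalRatio.tendsto_zero hα₀ hα₂)).mul_left ((α - 1) / (α + 1))
  simp only [← marchalW_add_two_div_factorial (by linarith : α + 1 ≠ 0)] at htel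
  have hsum : marchalW α (0 + 1) / (0 + 2).factorial
      + (α - 1) / (α + 1) * (marchalRatio α 0 - 0) = (α - 1) / (2 * (α + 1)) := by
    rw [marchalW_one, marchalRatio.zero]
    field_simp
    ring
  exact hsum ▸ htel.zero_add (f := fun k : ℕ => marchalW α (k + 1) / (k + 2).factorial)

theorem hasSum_degreeDist {α : ℝ} (hα₀ : 0 ≤ α) (hα₂ : α ≤ 2) : HasSum (degreeDist α) 1 := by
  have htail : HasSum (fun k => degreeDist α (k + 2))
      (2 * (1 + α) * α / (α ^ 2 + α + 2) * ((α - 1) / (2 * (α + 1)))) := by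
    have hterm (k : ℕ) : degreeDist α (k + 2) = 2 * (1 + α) * α / (α ^ 2 + α + 2) *
        (marchalW α (k + 1) / (k + 2).factorial) := by
      simp only [degreeDist, if_neg (by omega : k + 2 ≠ 1), if_pos (by omega : 2 ≤ k + 2),
        show k + 2 - 1 = k + 1 by omega]
      ring
    rw [funext hterm]
    exact (hasSum_marchalW_div_factorial hα₀ hα₂).mul_left _
  convert (htail.zero_add (f := fun k => degreeDist α (k + 1))).zero_add using 1
  have : α ^ 2 + α + 2 ≠ 0 := by nlinarith
  norm_num [degreeDist]
  field_simp
  ring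

/-- `∑_{k ≥ 2} w_{k-1}/k! = (α-1)/(2(α+1))`, and consequently `degreeDist α` is a
probability distribution on the positive integers. -/
theorem degreeDist_isProbability (α : ℝ) (hα₁ : 1 < α) (hα₂ : α < 2) :
    (∑' k : ℕ, marchalW α (k + 1) / (Nat.factorial (k + 2) : ℝ) = (α - 1) / (2 * (α + 1))) ∧
    ∑' k : ℕ, degreeDist α k = 1 :=
  ⟨(hasSum_marchalW_div_factorial (by linarith) hα₂.le).tsum_eq,
    (hasSum_degreeDist (by linarith) hα₂.le).tsum_eq⟩
end

section
/- The distribution η_α (with η_α(0) = 1/α, η_α(1) = 0, η_α(k) = w_k/k! for k ≥ 2) is critical: its mean ∑_{k≥0} k·η_α(k) equals 1. -/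
noncomputable def eta (α : ℝ) (k : ℕ) : ℝ :=
  if k = 0 then 1 / α
  else if k = 1 then 0
  else marchalW α k / (Nat.factorial k : ℝ)

/-!
With `P n = ∏_{i=1}^{n} (1 - (α - 1)/i)` (`Marchal.prod α n`) one finds
`k η_α(k) = P (k-2) - P (k-1)` for `k ≥ 2`, so the mean telescopes to `P 0 - lim P = 1`. The limit vanishes because
`P n ≤ exp (-(α - 1) H_n)` and the harmonic numbers `H_n` diverge.
-/

open Finset Filter Topology

theorem tendsto_prod_range_one_sub_nhds_zero {a : ℕ → ℝ} (ha : ∀ i, a i ≤ 1)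
    (hsum : Tendsto (fun n => ∑ i ∈ range n, a i) atTop atTop) :
    Tendsto (fun n => ∏ i ∈ range n, (1 - a i)) atTop (𝓝 0) := by
  have hfactor_nonneg : ∀ i, 0 ≤ 1 - a i := fun i => sub_nonneg.2 (ha i)
  have hbound : ∀ n, ∏ i ∈ range n, (1 - a i) ≤ Real.exp (-∑ i ∈ range n, a i) := fun n =>
    calc ∏ i ∈ range n, (1 - a i)
        ≤ ∏ i ∈ range n, Real.exp (-a i) :=
          prod_le_prod (fun i _ => hfactor_nonneg i) fun i _ => by
            linarith [Real.add_one_le_exp (-a i)]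
      _ = Real.exp (-∑ i ∈ range n, a i) := by rw [← Real.exp_sum, sum_neg_distrib]
  exact tendsto_of_tendsto_of_tendsto_of_le_of_le tendsto_const_nhds
    (Real.tendsto_exp_atBot.comp (tendsto_neg_atTop_atBot.comp hsum))
    (fun n => prod_nonneg fun i _ => hfactor_nonneg i) hbound

theorem hasSum_sub_succ_of_tendsto_zero {g : ℕ → ℝ} (hg : ∀ n, g (n + 1) ≤ g n)
    (hlim : Tendsto g atTop (𝓝 0)) : HasSum (fun n => g n - g (n + 1)) (g 0) := by
  rw [hasSum_iff_tendsto_nat_of_nonneg (fun n => sub_nonneg.2 (hg n))]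
  simpa only [sum_range_sub', sub_zero] using hlim.const_sub (g 0)

namespace Marchal

variable {α : ℝ}

noncomputable def prod (α : ℝ) (n : ℕ) : ℝ :=
  ∏ i ∈ range n, (1 - (α - 1) / ((i : ℝ) + 1))

lemma prod_succ (α : ℝ) (n : ℕ) :
    prod α (n + 1) = prod α n * (1 - (α - 1) / ((n : ℝ) + 1)) :=
  prod_range_succ _ n

lemma marchalW_add_three (α : ℝ) (n : ℕ) :
    marchalW α (n + 3) = marchalW α (n + 2) * ((n : ℝ) + 2 - α) := by
  simp only [marchalW, prod_Ico_succ_top (show 2 ≤ n + 2 by omega)]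
  push_cast
  ring

lemma marchalW_add_two (α : ℝ) (n : ℕ) :
    marchalW α (n + 2) = (α - 1) * n.factorial * prod α n := by
  induction n with
  | zero => simp [marchalW, prod]
  | succ n ih =>
    rw [marchalW_add_three, ih, prod_succ, Nat.factorial_succ]
    push_cast
    field_simp
    ring

lemma natCast_mul_eta_add_two (α : ℝ) (n : ℕ) :
    ((n + 2 : ℕ) : ℝ) * eta α (n + 2) = prod α n - prod α (n + 1) := by
  rw [eta, if_neg (by omega), if_neg (by omega), marchalW_add_two, prod_succ,
    Nat.factorial_succ, Nat.factorial_succ]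
  push_cast
  field_simp
  ring

lemma prod_succ_le (hα₁ : 1 ≤ α) (hα₂ : α ≤ 2) (n : ℕ) : prod α (n + 1) ≤ prod α n := by
  have hfactor : ∀ i : ℕ, 0 ≤ 1 - (α - 1) / ((i : ℝ) + 1) ∧ 1 - (α - 1) / ((i : ℝ) + 1) ≤ 1 :=
    fun i => ⟨sub_nonneg.2 ((div_le_one (by positivity)).2 (by linarith [i.cast_nonneg (α := ℝ)])),
      sub_le_self _ (by positivity [sub_nonneg.2 hα₁])⟩
  rw [prod_succ]
  exact mul_le_of_le_one_right (prod_nonneg fun i _ => (hfactor i).1) (hfactor n).2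

lemma tendsto_prod (hα₁ : 1 < α) (hα₂ : α ≤ 2) : Tendsto (prod α) atTop (𝓝 0) := by
  refine tendsto_prod_range_one_sub_nhds_zero (fun i => ?_) ?_
  · exact (div_le_one (by positivity)).2 (by linarith [i.cast_nonneg (α := ℝ)])
  · simp_rw [div_eq_mul_one_div (α - 1), ← mul_sum]
    exact Real.tendsto_sum_range_one_div_nat_succ_atTop.const_mul_atTop (by linarith)

end Marchal

/-- The offspring distribution `η_α` is critical: its mean equals `1`. -/
theorem eta_critical (α : ℝ) (hα₁ : 1 < α) (hα₂ : α < 2) :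
    ∑' k : ℕ, (k : ℝ) * eta α k = 1 := by
  have htail : HasSum (fun n => ((n + 2 : ℕ) : ℝ) * eta α (n + 2)) 1 := by
    simp_rw [Marchal.natCast_mul_eta_add_two]
    simpa [Marchal.prod] using hasSum_sub_succ_of_tendsto_zero
      (Marchal.prod_succ_le hα₁.le hα₂.le) (Marchal.tendsto_prod hα₁ hα₂.le)
  have hhead : ∑ k ∈ range 2, (k : ℝ) * eta α k = 0 := by simp [sum_range_succ, eta]
  rw [← sub_zero 1, ← hhead] at htail
  exact ((hasSum_nat_add_iff' 2).1 htail).tsum_eq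
end

section
/- With η_α(k) = w_k/k! for k ≥ 2, one has the power-law tail asymptotic: k^{1+α}·η_α(k) → (α−1)/Γ(2−α) as k → ∞. -/
/-! With `s = 2 - α`, `η_α(k) = (α - 1) s (s + 1) ⋯ (s + k - 3) / k!`. Euler's limit
`k^s k! / (s (s + 1) ⋯ (s + k)) → Γ(s)` then gives the tail once the three missing factors
`(s + k - 2)(s + k - 1)(s + k) ∼ k³` are accounted for, since `k^{1+α} = k³ / k^s`. -/

open Filter Finset Real Topology
open scoped Nat

theorem Real.tendsto_prod_range_add_div_rpow_mul_factorial {s : ℝ} (hs : Gamma s ≠ 0) :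
    Tendsto (fun n : ℕ ↦ (∏ j ∈ range (n + 1), (s + j)) / ((n : ℝ) ^ s * n !)) atTop
      (𝓝 (Gamma s)⁻¹) := by
  simpa only [GammaSeq, inv_div] using (GammaSeq_tendsto_Gamma s).inv₀ hs

theorem eta_eq_prod_div_factorial (α : ℝ) {k : ℕ} (hk : 2 ≤ k) :
    eta α k = (α - 1) * (∏ j ∈ range (k - 2), (2 - α + j)) / k ! := by
  obtain ⟨n, rfl⟩ := Nat.exists_eq_add_of_le' hk
  have hw : marchalW α (n + 2) = (α - 1) * ∏ j ∈ Ico 2 (n + 2), ((j : ℝ) - α) := rfl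
  rw [eta, if_neg (by omega), if_neg (by omega), hw, prod_Ico_eq_prod_range, add_tsub_cancel_right]
  congr 2
  exact prod_congr rfl fun j _ ↦ by push_cast; ring

theorem rpow_one_add_mul_eta_eq {α : ℝ} (hα : α < 2) {k : ℕ} (hk : 2 ≤ k) :
    (k : ℝ) ^ (1 + α) * eta α k = (α - 1) *
      ((∏ j ∈ range (k + 1), (2 - α + j)) / ((k : ℝ) ^ (2 - α) * k !)) *
      (k / (k + -α) * (k / (k + (1 - α))) * (k / (k + (2 - α)))) := by
  obtain ⟨n, rfl⟩ := Nat.exists_eq_add_of_le' hk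
  have hprod : ∏ j ∈ range (n + 2 + 1), (2 - α + j) =
      (∏ j ∈ range n, (2 - α + j)) * ((n + 2 : ℕ) + -α) * ((n + 2 : ℕ) + (1 - α)) *
        ((n + 2 : ℕ) + (2 - α)) := by
    simp only [prod_range_succ]
    push_cast
    ring
  have hpos : (0 : ℝ) < (n + 2 : ℕ) := by positivity
  have hrpow : (n + 2 : ℕ) ^ (1 + α) = ((n + 2 : ℕ) : ℝ) ^ 3 / (n + 2 : ℕ) ^ (2 - α) := by
    rw [← rpow_natCast, ← rpow_sub hpos]
    ring_nf
  rw [eta_eq_prod_div_factorial α hk, hprod, hrpow, add_tsub_cancel_right]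
  have : ((n + 2 : ℕ) : ℝ) + -α ≠ 0 := by push_cast; linarith
  have : ((n + 2 : ℕ) : ℝ) + (1 - α) ≠ 0 := by push_cast; linarith
  have : ((n + 2 : ℕ) : ℝ) + (2 - α) ≠ 0 := by push_cast; linarith
  have : ((n + 2 : ℕ) : ℝ) ^ (2 - α) ≠ 0 := by positivity
  field_simp

theorem eta_tail_asymptotic_general (α : ℝ) (hα₂ : α < 2) :
    Filter.Tendsto (fun k : ℕ => (k : ℝ) ^ ((1 : ℝ) + α) * eta α k)
      Filter.atTop (nhds ((α - 1) / Real.Gamma (2 - α))) := by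
  have hΓ : Gamma (2 - α) ≠ 0 := (Gamma_pos_of_pos (by linarith)).ne'
  have hlim := (tendsto_const_nhds (x := α - 1)).mul
    (tendsto_prod_range_add_div_rpow_mul_factorial hΓ) |>.mul
    (((tendsto_natCast_div_add_atTop (-α)).mul (tendsto_natCast_div_add_atTop (1 - α))).mul
      (tendsto_natCast_div_add_atTop (2 - α)))
  rw [one_mul, one_mul, mul_one, ← div_eq_mul_inv] at hlim
  exact hlim.congr' <| (eventually_ge_atTop 2).mono fun k hk ↦
    (rpow_one_add_mul_eta_eq hα₂ hk).symm

/-- Power-law tail of `η_α`: `k^{1+α} · η_α(k) → (α-1)/Γ(2-α)` as `k → ∞`. -/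
theorem eta_tail_asymptotic (α : ℝ) (hα₁ : 1 < α) (hα₂ : α < 2) :
    Filter.Tendsto (fun k : ℕ => (k : ℝ) ^ ((1 : ℝ) + α) * eta α k)
      Filter.atTop (nhds ((α - 1) / Real.Gamma (2 - α))) :=
  eta_tail_asymptotic_general α hα₂
end

section
/- Fix a degree sequence d_1,…,d_n of positive integers with even sum, and attach d_i distinguishable half-edges to vertex i. For a multigraph G with these degrees, with sl(G) self-loops and edge multiplicities mult(e) for e in the support of its edge multiset, the number of perfect matchings of the ∑ d_i half-edges that produce G equals (∏_{i=1}^n d_i!)/(2^{sl(G)} ∏_{e} mult(e)!). Consequently, since the total number of perfect matchings is (∑_{i=1}^n d_i − 1)!!, the configuration model produces G with probability (∏_{i=1}^n d_i!)/((∑_{i=1}^n d_i − 1)!! · 2^{sl(G)} ∏_{e} mult(e)!). -/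
/-!
Fix a half-edge `a` at vertex `v`. A matching producing `G` pairs `a` with a half-edge `b` at
some vertex `u` with `s(v, u) ∈ G`, and composing with the transposition `(a b)` identifies these
matchings with the matchings of the remaining half-edges that produce `G - s(v, u)`. By induction
their number is the formula for the reduced data; it does not depend on the choice of `b` at `u`,
so summing over the half-edges `b` at `u` and then over `u`, with
`∑ᵤ (1 + [u = v]) mult(s(v, u)) = d_v`, gives the formula for `G`. The total number of perfect
matchings is the special case of `m` loops at a single vertex, where `(2m)! / (2^m m!) = (2m-1)‼`.
-/

/-- The degree of vertex `v` in the multigraph given by the edge multiset `G`: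
self-loops count twice. -/
def mdegree {n : ℕ} (G : Multiset (Sym2 (Fin n))) (v : Fin n) : ℕ :=
  (G.map fun e => if e = s(v, v) then 2 else if v ∈ e then 1 else 0).sum

/-- The number of self-loops of the multigraph `G`. -/
def selfLoops {n : ℕ} (G : Multiset (Sym2 (Fin n))) : ℕ :=
  Multiset.card (G.filter fun e => e.IsDiag)

/-- A perfect matching of the half-edges: a fixed-point-free involution. -/
def IsPerfectMatching {H : Type*} (f : H → H) : Prop :=
  (∀ x, f (f x) = x) ∧ ∀ x, f x ≠ x

/-- The matching `f` of the half-edges (half-edge `⟨i, j⟩` is attached to vertex `i`)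
produces the multigraph `G`: each matched pair `{x, f x}` forms the edge joining the
vertices carrying `x` and `f x`, so running over all half-edges each edge of `G` is
seen exactly twice. -/
def Produces {n : ℕ} {d : Fin n → ℕ}
    (f : (Σ i : Fin n, Fin (d i)) → (Σ i : Fin n, Fin (d i)))
    (G : Multiset (Sym2 (Fin n))) : Prop :=
  ((Finset.univ : Finset (Σ i : Fin n, Fin (d i))).val.map
      fun x => s(x.1, (f x).1)) = 2 • G

open Finset
open Function (Involutive)
open scoped Nat

theorem Finset.prod_factorial_eq_mul_prod_factorial {ι : Type*} [DecidableEq ι] {T : Finset ι}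
    {e : ι} (he : e ∈ T) (g g' : ι → ℕ) (h : ∀ i, g i = g' i + if i = e then 1 else 0) :
    ∏ i ∈ T, (g i)! = g e * ∏ i ∈ T, (g' i)! := by
  rw [← mul_prod_erase T _ he, ← mul_prod_erase T _ he, ← mul_assoc, h e, if_pos rfl,
    ← Nat.factorial_succ]
  congr 1
  exact prod_congr rfl fun i hi => by rw [h i, if_neg (ne_of_mem_erase hi), add_zero]

theorem Finset.card_filter_eq_card_filter_erase_add {α : Type*} [DecidableEq α] {s : Finset α}
    {a : α} (ha : a ∈ s) (p : α → Prop) [DecidablePred p] :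
    #{x ∈ s | p x} = #{x ∈ s.erase a | p x} + if p a then 1 else 0 := by
  rw [filter_erase]
  split_ifs with hp
  · rw [card_erase_add_one (mem_filter.2 ⟨ha, hp⟩)]
  · rw [erase_eq_of_notMem fun h => hp (mem_filter.1 h).2, add_zero]

theorem Finset.sum_div_card_fiber {ι κ K : Type*} [DecidableEq κ] [Fintype κ] [Semifield K]
    [CharZero K] (t : Finset ι) (ℓ : ι → κ) (F : κ → K)
    (hF : ∀ u, (∀ x ∈ t, ℓ x ≠ u) → F u = 0) :
    ∑ x ∈ t, F (ℓ x) / #{y ∈ t | ℓ y = ℓ x} = ∑ u, F u := by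
  rw [← sum_fiberwise t ℓ]
  refine sum_congr rfl fun u _ => ?_
  rw [sum_congr rfl fun x hx => by rw [(mem_filter.1 hx).2], sum_const, nsmul_eq_mul]
  rcases eq_or_ne #{y ∈ t | ℓ y = u} 0 with h | h
  · rw [hF u fun x hx hxu => by simp_all [filter_eq_empty_iff], h, Nat.cast_zero, zero_mul]
  · field_simp

theorem Function.Involutive.comp_swap {α : Type*} [DecidableEq α] {f : α → α}
    (hf : Involutive f) {a b : α} (h : Equiv.swap (f a) (f b) = Equiv.swap a b) :
    Involutive (f ∘ Equiv.swap a b) := by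
  have hcomm : ∀ z, Equiv.swap a b (f z) = f (Equiv.swap a b z) := fun z => by
    rw [← hf.injective.swap_apply, h]
  intro x
  simp only [Function.comp_apply, hcomm, Equiv.swap_apply_self, hf x]

theorem Nat.factorial_two_mul_eq (m : ℕ) : (2 * m)! = 2 ^ m * m ! * (2 * m - 1)‼ := by
  cases m with
  | zero => rfl
  | succ m =>
    have h : 2 * (m + 1) = 2 * m + 1 + 1 := by ring
    rw [h, Nat.factorial_eq_mul_doubleFactorial, ← h, Nat.doubleFactorial_two_mul,
      show 2 * (m + 1) - 1 = 2 * m + 1 by omega, mul_comm]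

theorem Finset.val_map_eq_cons_cons {α β : Type*} [DecidableEq α] {s : Finset α} {a b : α}
    (ha : a ∈ s) (hb : b ∈ s) (hab : a ≠ b) (g : α → β) :
    s.val.map g = g a ::ₘ g b ::ₘ ((s.erase a).erase b).val.map g := by
  rw [← Multiset.map_cons, ← Multiset.map_cons, ← insert_val_of_notMem (notMem_erase b _),
    insert_erase (mem_erase.2 ⟨hab.symm, hb⟩), ← insert_val_of_notMem (notMem_erase a _),
    insert_erase ha]

theorem Multiset.two_nsmul_eq_cons_cons {α : Type*} [DecidableEq α] {G : Multiset α} {e : α}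
    (he : e ∈ G) : 2 • G = e ::ₘ e ::ₘ 2 • G.erase e := by
  conv_lhs => rw [← Multiset.cons_erase he]
  rw [two_nsmul, two_nsmul, Multiset.cons_add, Multiset.add_cons]

namespace ConfigurationModel

variable {n : ℕ} {V H : Type*}

theorem mdegree_cons (e : Sym2 (Fin n)) (G : Multiset (Sym2 (Fin n))) (v : Fin n) :
    mdegree (e ::ₘ G) v =
      (if e = s(v, v) then 2 else if v ∈ e then 1 else 0) + mdegree G v := by
  simp [mdegree]

theorem mdegree_cons_mk (p q : Fin n) (G : Multiset (Sym2 (Fin n))) (v : Fin n) :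
    mdegree (s(p, q) ::ₘ G) v =
      mdegree G v + (if p = v then 1 else 0) + (if q = v then 1 else 0) := by
  rw [mdegree_cons]
  by_cases hp : p = v <;> by_cases hq : q = v <;> simp [hp, hq, eq_comm] <;> omega

theorem mdegree_eq_sum_count (G : Multiset (Sym2 (Fin n))) (v : Fin n) :
    mdegree G v = ∑ u, (if u = v then 2 else 1) * G.count s(v, u) := by
  induction G using Multiset.induction with
  | empty => simp [mdegree]
  | cons e G ih =>
    have hweight : (if e = s(v, v) then 2 else if v ∈ e then 1 else 0) =
        ∑ u, (if u = v then 2 else 1) * if e = s(v, u) then 1 else 0 := by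
      by_cases hv : v ∈ e
      · obtain ⟨w, rfl⟩ := Sym2.mem_iff_exists.1 hv
        simp only [Sym2.congr_right, Sym2.mem_mk_left, if_true, mul_ite, mul_one, mul_zero,
          Fintype.sum_ite_eq]
      · have hne : ∀ u, e ≠ s(v, u) := fun u h => hv (h ▸ Sym2.mem_mk_left v u)
        simp [hne, hv]
    simp only [mdegree_cons, ih, hweight, Multiset.count_cons, ← sum_add_distrib, mul_add]
    exact sum_congr rfl fun u _ => by simp [eq_comm, add_comm]

theorem eq_zero_of_mdegree_eq_zero {G : Multiset (Sym2 (Fin n))} (h : ∀ v, mdegree G v = 0) :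
    G = 0 := by
  refine Multiset.eq_zero_of_forall_notMem fun e he => ?_
  induction e using Sym2.ind with
  | h v u =>
    have := h v
    rw [mdegree_eq_sum_count, sum_eq_zero_iff] at this
    have := this u (mem_univ u)
    simp only [mul_eq_zero, Multiset.count_eq_zero] at this
    split_ifs at this <;> simp_all

def multiplicityFactor (G : Multiset (Sym2 (Fin n))) : ℕ :=
  2 ^ selfLoops G * ∏ e ∈ G.toFinset, (G.count e)!

theorem multiplicityFactor_zero : multiplicityFactor (0 : Multiset (Sym2 (Fin n))) = 1 := by
  simp [multiplicityFactor, selfLoops]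

theorem multiplicityFactor_pos (G : Multiset (Sym2 (Fin n))) : 0 < multiplicityFactor G :=
  Nat.mul_pos (Nat.two_pow_pos _) (prod_pos fun _ _ => Nat.factorial_pos _)

theorem multiplicityFactor_eq_mul_erase {G : Multiset (Sym2 (Fin n))} {e : Sym2 (Fin n)}
    (he : e ∈ G) :
    multiplicityFactor G =
      (if e.IsDiag then 2 else 1) * G.count e * multiplicityFactor (G.erase e) := by
  have hloops : selfLoops G = selfLoops (G.erase e) + if e.IsDiag then 1 else 0 := by
    simp only [selfLoops, ← Multiset.countP_eq_card_filter]
    conv_lhs => rw [← Multiset.cons_erase he]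
    rw [Multiset.countP_cons]
  have hmult : ∏ f ∈ G.toFinset, (G.count f)! =
      G.count e * ∏ f ∈ (G.erase e).toFinset, ((G.erase e).count f)! := by
    rw [prod_factorial_eq_mul_prod_factorial (Multiset.mem_toFinset.2 he) _
      fun f => (G.erase e).count f]
    · congr 1
      refine (prod_subset (fun f hf => ?_) fun f _ hf => ?_).symm
      · exact Multiset.mem_toFinset.2 (Multiset.mem_of_mem_erase (Multiset.mem_toFinset.1 hf))
      · rw [Multiset.count_eq_zero_of_notMem (mt Multiset.mem_toFinset.2 hf), Nat.factorial_zero]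
    · intro f
      split_ifs with hf
      · subst hf; rw [Multiset.count_erase_self, Nat.sub_add_cancel (Multiset.count_pos.2 he)]
      · rw [Multiset.count_erase_of_ne hf, add_zero]
  rw [multiplicityFactor, multiplicityFactor, hloops, hmult, pow_add]
  split_ifs <;> ring

/-- `ℓ x` is the vertex carrying the half-edge `x`; only the half-edges in `s` are matched. -/
structure IsMatchingOn (ℓ : H → V) (s : Finset H) (G : Multiset (Sym2 V)) (f : H → H) :
    Prop where
  involutive : Involutive f
  apply_eq_self_iff : ∀ x, f x = x ↔ x ∉ s
  map_edge : s.val.map (fun x => s(ℓ x, ℓ (f x))) = 2 • G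

namespace IsMatchingOn

variable {ℓ : H → V} {s : Finset H} {G : Multiset (Sym2 V)} {f : H → H} {a b : H}

theorem mk_mem (hf : IsMatchingOn ℓ s G f) (ha : a ∈ s) : s(ℓ a, ℓ (f a)) ∈ G := by
  have : s(ℓ a, ℓ (f a)) ∈ 2 • G := hf.map_edge ▸ Multiset.mem_map_of_mem _ ha
  exact (Multiset.mem_nsmul.1 this).2

variable [DecidableEq H]

theorem apply_mem_erase (hf : IsMatchingOn ℓ s G f) (ha : a ∈ s) : f a ∈ s.erase a := by
  have hfa : f a ≠ a := fun h => (hf.apply_eq_self_iff a).1 h ha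
  refine mem_erase.2 ⟨hfa, by_contra fun h => hfa ?_⟩
  rw [← (hf.apply_eq_self_iff (f a)).2 h, hf.involutive]

variable [DecidableEq V]

theorem comp_swap (hf : IsMatchingOn ℓ s G f) (hab : a ≠ b) (hfa : f a = b) :
    IsMatchingOn ℓ ((s.erase a).erase b) (G.erase s(ℓ a, ℓ b)) (f ∘ Equiv.swap a b) := by
  have hfb : f b = a := hfa ▸ hf.involutive a
  have ha : a ∈ s := by_contra fun h => hab (hfa ▸ (hf.apply_eq_self_iff a).2 h).symm
  have hb : b ∈ s := mem_of_mem_erase (hfa ▸ hf.apply_mem_erase ha)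
  have he : s(ℓ a, ℓ b) ∈ G := hfa ▸ hf.mk_mem ha
  refine ⟨hf.involutive.comp_swap (by rw [hfa, hfb, Equiv.swap_comm]), fun x => ?_, ?_⟩
  · rcases eq_or_ne x a with rfl | hxa
    · simp [hfb]
    rcases eq_or_ne x b with rfl | hxb
    · simp [hfa]
    simp [Equiv.swap_apply_of_ne_of_ne hxa hxb, hxa, hxb, hf.apply_eq_self_iff]
  · have hmap := hf.map_edge
    rw [val_map_eq_cons_cons ha hb hab, Multiset.two_nsmul_eq_cons_cons he, hfa, hfb,
      Sym2.eq_swap (a := ℓ b)] at hmap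
    rw [← (Multiset.cons_inj_right _).1 ((Multiset.cons_inj_right _).1 hmap)]
    refine Multiset.map_congr rfl fun x hx => ?_
    obtain ⟨hxb, hxa, -⟩ : x ≠ b ∧ x ≠ a ∧ x ∈ s := by
      simpa only [mem_val, mem_erase] using hx
    rw [Function.comp_apply, Equiv.swap_apply_of_ne_of_ne hxa hxb]

theorem of_comp_swap (hf : IsMatchingOn ℓ ((s.erase a).erase b) (G.erase s(ℓ a, ℓ b)) f)
    (ha : a ∈ s) (hb : b ∈ s) (hab : a ≠ b) (he : s(ℓ a, ℓ b) ∈ G) :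
    IsMatchingOn ℓ s G (f ∘ Equiv.swap a b) := by
  have hfa : f a = a := (hf.apply_eq_self_iff a).2 (by simp)
  have hfb : f b = b := (hf.apply_eq_self_iff b).2 (by simp)
  refine ⟨hf.involutive.comp_swap (by rw [hfa, hfb]), fun x => ?_, ?_⟩
  · rcases eq_or_ne x a with rfl | hxa
    · simp [hfb, hab.symm, ha]
    rcases eq_or_ne x b with rfl | hxb
    · simp [hfa, hab, hb]
    simp [Equiv.swap_apply_of_ne_of_ne hxa hxb, hxa, hxb, hf.apply_eq_self_iff]
  · rw [val_map_eq_cons_cons ha hb hab, Multiset.two_nsmul_eq_cons_cons he, ← hf.map_edge]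
    simp only [Function.comp_apply, Equiv.swap_apply_left, Equiv.swap_apply_right, hfa, hfb,
      Sym2.eq_swap (a := ℓ b)]
    congr 2
    refine Multiset.map_congr rfl fun x hx => ?_
    obtain ⟨hxb, hxa, -⟩ : x ≠ b ∧ x ≠ a ∧ x ∈ s := by
      simpa only [mem_val, mem_erase] using hx
    rw [Equiv.swap_apply_of_ne_of_ne hxa hxb]

end IsMatchingOn

section

variable [DecidableEq H] [Fintype H]

noncomputable def matchingsOn (ℓ : H → V) (s : Finset H) (G : Multiset (Sym2 V)) :
    Finset (H → H) :=
  by classical exact univ.filter (IsMatchingOn ℓ s G)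

variable {ℓ : H → V} {s : Finset H} {G : Multiset (Sym2 V)} {a b : H}

@[simp]
theorem mem_matchingsOn {f : H → H} : f ∈ matchingsOn ℓ s G ↔ IsMatchingOn ℓ s G f := by
  simp only [matchingsOn, mem_filter, mem_univ, true_and]

theorem natCard_isMatchingOn (ℓ : H → V) (s : Finset H) (G : Multiset (Sym2 V)) :
    Nat.card {f // IsMatchingOn ℓ s G f} = #(matchingsOn ℓ s G) := by
  classical
  rw [Nat.card_eq_fintype_card, Fintype.card_subtype, matchingsOn]

theorem matchingsOn_empty (ℓ : H → V) : matchingsOn ℓ ∅ 0 = {id} := by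
  ext f
  simp only [mem_matchingsOn, mem_singleton]
  refine ⟨fun hf => funext fun x => (hf.apply_eq_self_iff x).2 (notMem_empty x), ?_⟩
  rintro rfl
  exact ⟨fun _ => rfl, by simp, by simp⟩

theorem card_matchingsOn_eq_sum (ha : a ∈ s) :
    #(matchingsOn ℓ s G) = ∑ b ∈ s.erase a, #{f ∈ matchingsOn ℓ s G | f a = b} :=
  card_eq_sum_card_fiberwise fun _ hf => (mem_matchingsOn.1 hf).apply_mem_erase ha

theorem card_filter_apply_eq_zero (ha : a ∈ s) (he : s(ℓ a, ℓ b) ∉ G) :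
    #{f ∈ matchingsOn ℓ s G | f a = b} = 0 := by
  refine card_eq_zero.2 (filter_eq_empty_iff.2 fun f hf hfa => he ?_)
  exact hfa ▸ (mem_matchingsOn.1 hf).mk_mem ha

theorem card_filter_apply_eq [DecidableEq V] (ha : a ∈ s) (hb : b ∈ s) (hab : a ≠ b)
    (he : s(ℓ a, ℓ b) ∈ G) :
    #{f ∈ matchingsOn ℓ s G | f a = b} =
      #(matchingsOn ℓ ((s.erase a).erase b) (G.erase s(ℓ a, ℓ b))) := by
  refine card_nbij' (· ∘ Equiv.swap a b) (· ∘ Equiv.swap a b) (fun f hf => ?_)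
    (fun g hg => ?_) (fun f _ => ?_) (fun g _ => ?_)
  · obtain ⟨hf, hfa⟩ := mem_filter.1 (mem_coe.1 hf)
    simpa using (mem_matchingsOn.1 hf).comp_swap hab hfa
  · simp only [mem_coe, mem_matchingsOn] at hg
    simpa [hg.of_comp_swap ha hb hab he] using (hg.apply_eq_self_iff b).2 (by simp)
  all_goals funext x; simp

end

section

variable {ℓ : H → Fin n} {s : Finset H} {G : Multiset (Sym2 (Fin n))} {a b : H}

def fiberFactorial (ℓ : H → Fin n) (s : Finset H) : ℕ :=
  ∏ v, (#{x ∈ s | ℓ x = v})!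

theorem fiberFactorial_empty : fiberFactorial ℓ ∅ = 1 := by
  simp [fiberFactorial]

variable [DecidableEq H]

theorem fiberFactorial_eq_mul_erase (ha : a ∈ s) :
    fiberFactorial ℓ s = #{x ∈ s | ℓ x = ℓ a} * fiberFactorial ℓ (s.erase a) :=
  prod_factorial_eq_mul_prod_factorial (mem_univ (ℓ a)) _ _ fun v => by
    simp only [card_filter_eq_card_filter_erase_add ha, eq_comm]

theorem mdegree_erase_mk (hdeg : ∀ v, mdegree G v = #{x ∈ s | ℓ x = v}) (ha : a ∈ s)
    (hb : b ∈ s.erase a) (he : s(ℓ a, ℓ b) ∈ G) (v : Fin n) :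
    mdegree (G.erase s(ℓ a, ℓ b)) v = #{x ∈ (s.erase a).erase b | ℓ x = v} := by
  have hcons := mdegree_cons_mk (ℓ a) (ℓ b) (G.erase s(ℓ a, ℓ b)) v
  rw [Multiset.cons_erase he, hdeg, card_filter_eq_card_filter_erase_add ha,
    card_filter_eq_card_filter_erase_add hb] at hcons
  omega

theorem count_eq_zero_of_forall_ne (hdeg : ∀ v, mdegree G v = #{x ∈ s | ℓ x = v})
    (ha : a ∈ s) {u : Fin n} (hu : ∀ x ∈ s.erase a, ℓ x ≠ u) :
    G.count s(ℓ a, u) = 0 := by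
  have hfiber : #{x ∈ s | ℓ x = u} = if ℓ a = u then 1 else 0 := by
    rw [card_filter_eq_card_filter_erase_add ha, card_eq_zero.2 (filter_eq_empty_iff.2 hu),
      zero_add]
  have hle : (if ℓ a = u then 2 else 1) * G.count s(u, ℓ a) ≤ mdegree G u := by
    rw [mdegree_eq_sum_count]
    exact single_le_sum (f := fun w => (if w = u then 2 else 1) * G.count s(u, w))
      (fun _ _ => Nat.zero_le _) (mem_univ (ℓ a))
  rw [hdeg, hfiber, Sym2.eq_swap] at hle
  split_ifs at hle <;> omega

variable [Fintype H]

theorem card_matchingsOn (ℓ : H → Fin n) (s : Finset H) (G : Multiset (Sym2 (Fin n)))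
    (hdeg : ∀ v, mdegree G v = #{x ∈ s | ℓ x = v}) :
    (#(matchingsOn ℓ s G) : ℚ) = fiberFactorial ℓ s / multiplicityFactor G := by
  induction s using Finset.strongInduction generalizing G with | H s ih =>
  rcases s.eq_empty_or_nonempty with rfl | ⟨a, ha⟩
  · obtain rfl : G = 0 := eq_zero_of_mdegree_eq_zero fun v => by simp [hdeg]
    simp [matchingsOn_empty, fiberFactorial_empty, multiplicityFactor_zero]
  -- `F u` counts the matchings that pair `a` with a half-edge at `u`.
  set F : Fin n → ℚ := fun u => fiberFactorial ℓ (s.erase a) *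
    ↑((if u = ℓ a then 2 else 1) * G.count s(ℓ a, u)) / multiplicityFactor G with hF
  have hpartner : ∀ b ∈ s.erase a,
      (#{f ∈ matchingsOn ℓ s G | f a = b} : ℚ) =
        F (ℓ b) / #{x ∈ s.erase a | ℓ x = ℓ b} := by
    intro b hb
    obtain ⟨hba, hbs⟩ := mem_erase.1 hb
    by_cases he : s(ℓ a, ℓ b) ∈ G
    · have hsub : (s.erase a).erase b ⊂ s :=
        (erase_subset b _).trans_ssubset (erase_ssubset ha)
      have hfiber : (#{x ∈ s.erase a | ℓ x = ℓ b} : ℚ) ≠ 0 :=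
        Nat.cast_ne_zero.2 (card_ne_zero.2 ⟨b, mem_filter.2 ⟨hb, rfl⟩⟩)
      have hcount : (G.count s(ℓ a, ℓ b) : ℚ) ≠ 0 :=
        Nat.cast_ne_zero.2 (Multiset.count_ne_zero.2 he)
      have hmult := (multiplicityFactor_pos (G.erase s(ℓ a, ℓ b))).ne'
      rw [card_filter_apply_eq ha hbs hba.symm he, ih _ hsub _ (mdegree_erase_mk hdeg ha hb he),
        hF, fiberFactorial_eq_mul_erase hb, multiplicityFactor_eq_mul_erase he]
      simp only [Sym2.mk_isDiag_iff, eq_comm (a := ℓ a)]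
      push_cast
      field_simp
    · simp [card_filter_apply_eq_zero ha he, hF, Multiset.count_eq_zero_of_notMem he]
  have hF_eq_zero (u : Fin n) (hu : ∀ x ∈ s.erase a, ℓ x ≠ u) : F u = 0 := by
    simp [hF, count_eq_zero_of_forall_ne hdeg ha hu]
  rw [card_matchingsOn_eq_sum ha, Nat.cast_sum, sum_congr rfl hpartner,
    sum_div_card_fiber _ _ F hF_eq_zero, hF, ← sum_div, ← mul_sum, ← Nat.cast_sum,
    ← mdegree_eq_sum_count, hdeg, fiberFactorial_eq_mul_erase ha, Nat.cast_mul,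
    mul_comm (#{x ∈ s | ℓ x = ℓ a} : ℚ)]

end

section

variable [Fintype H]

theorem isMatchingOn_univ_iff {ℓ : H → V} {G : Multiset (Sym2 V)} {f : H → H} :
    IsMatchingOn ℓ univ G f ↔
      IsPerfectMatching f ∧ univ.val.map (fun x => s(ℓ x, ℓ (f x))) = 2 • G :=
  ⟨fun hf => ⟨⟨hf.involutive, fun x => by simpa using hf.apply_eq_self_iff x⟩,
      hf.map_edge⟩,
    fun ⟨⟨hinv, hne⟩, hmap⟩ => ⟨hinv, fun x => by simpa using hne x, hmap⟩⟩

variable [DecidableEq H]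

/-- A perfect matching of `2m` half-edges at a single vertex produces `m` loops there. -/
theorem natCard_isPerfectMatching {m : ℕ} (hH : Fintype.card H = 2 * m) :
    Nat.card {f : H → H // IsPerfectMatching f} = (2 * m - 1)‼ := by
  set G : Multiset (Sym2 (Fin 1)) := Multiset.replicate m s(0, 0)
  have hmatching (f : H → H) : IsPerfectMatching f ↔ IsMatchingOn (fun _ => 0) univ G f := by
    rw [isMatchingOn_univ_iff, Multiset.map_const', card_val, card_univ, hH,
      Multiset.nsmul_replicate, and_iff_left rfl]
  have hdeg (v : Fin 1) :
      mdegree G v = #{x ∈ univ | (fun _ : H => (0 : Fin 1)) x = v} := by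
    simp [Subsingleton.elim v 0, mdegree, G, hH, mul_comm]
  have hfiber : fiberFactorial (fun _ : H => (0 : Fin 1)) univ = (2 * m)! := by
    simp [fiberFactorial, hH]
  have hmult : multiplicityFactor G = 2 ^ m * m ! := by
    rcases eq_or_ne m 0 with rfl | hm
    · simp [G, multiplicityFactor_zero]
    · simp [multiplicityFactor, selfLoops, G, Multiset.toFinset_replicate, hm]
  have hcount := card_matchingsOn _ _ _ hdeg
  rw [hfiber, hmult, Nat.factorial_two_mul_eq, Nat.cast_mul, mul_div_cancel_left₀ _
    (Nat.cast_ne_zero.2 (Nat.mul_pos (Nat.two_pow_pos m) (Nat.factorial_pos m)).ne')] at hcount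
  rw [Nat.card_congr (Equiv.subtypeEquivRight hmatching), natCard_isMatchingOn]
  exact_mod_cast hcount

end

theorem card_filter_sigma_fst_eq (d : Fin n → ℕ) (v : Fin n) :
    #{x : Σ i : Fin n, Fin (d i) | x.1 = v} = d v := by
  rw [← Fintype.card_subtype, Fintype.card_congr (Equiv.sigmaSubtype v), Fintype.card_fin]

theorem natCard_isPerfectMatching_produces (d : Fin n → ℕ) (G : Multiset (Sym2 (Fin n)))
    (hdeg : ∀ i, mdegree G i = d i) :
    (Nat.card {f : (Σ i : Fin n, Fin (d i)) → (Σ i : Fin n, Fin (d i)) //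
        IsPerfectMatching f ∧ Produces f G} : ℚ) =
      (∏ i, ((d i)! : ℚ)) / multiplicityFactor G := by
  have hiff (f : (Σ i : Fin n, Fin (d i)) → (Σ i : Fin n, Fin (d i))) :
      IsMatchingOn Sigma.fst univ G f ↔ IsPerfectMatching f ∧ Produces f G :=
    isMatchingOn_univ_iff
  rw [← Nat.card_congr (Equiv.subtypeEquivRight hiff), natCard_isMatchingOn,
    card_matchingsOn _ _ _ fun v => by rw [hdeg, card_filter_sigma_fst_eq]]
  simp only [fiberFactorial, card_filter_sigma_fst_eq, Nat.cast_prod]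

end ConfigurationModel

theorem configuration_model_probability_general (n : ℕ) (d : Fin n → ℕ)
    (heven : Even (∑ i, d i)) (G : Multiset (Sym2 (Fin n)))
    (hdeg : ∀ i, mdegree G i = d i) :
    ((Nat.card {f : (Σ i : Fin n, Fin (d i)) → (Σ i : Fin n, Fin (d i)) //
          IsPerfectMatching f ∧ Produces f G} : ℚ)
        = (∏ i, (d i).factorial : ℚ) /
            (2 ^ selfLoops G * ∏ e ∈ G.toFinset, (G.count e).factorial)) ∧
    ((Nat.card {f : (Σ i : Fin n, Fin (d i)) → (Σ i : Fin n, Fin (d i)) //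
          IsPerfectMatching f} : ℚ)
        = Nat.doubleFactorial (∑ i, d i - 1)) ∧
    ((Nat.card {f : (Σ i : Fin n, Fin (d i)) → (Σ i : Fin n, Fin (d i)) //
          IsPerfectMatching f ∧ Produces f G} : ℚ) /
        (Nat.card {f : (Σ i : Fin n, Fin (d i)) → (Σ i : Fin n, Fin (d i)) //
          IsPerfectMatching f} : ℚ)
        = (∏ i, (d i).factorial : ℚ) /
            (Nat.doubleFactorial (∑ i, d i - 1) * 2 ^ selfLoops G *
              ∏ e ∈ G.toFinset, (G.count e).factorial)) := by
  have hproduces := ConfigurationModel.natCard_isPerfectMatching_produces d G hdeg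
  have hall : Nat.card {f : (Σ i : Fin n, Fin (d i)) → (Σ i : Fin n, Fin (d i)) //
      IsPerfectMatching f} = (∑ i, d i - 1)‼ := by
    obtain ⟨m, hm⟩ := heven
    rw [ConfigurationModel.natCard_isPerfectMatching (m := m) (by simp [hm, two_mul]), hm, two_mul]
  rw [ConfigurationModel.multiplicityFactor, Nat.cast_mul, Nat.cast_pow, Nat.cast_ofNat]
    at hproduces
  refine ⟨hproduces, by exact_mod_cast hall, ?_⟩
  rw [hproduces, hall, div_div]
  ring

/-- Configuration model counting: for a multigraph `G` with degrees `d`, the number of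
perfect matchings of the half-edges producing `G` equals
`(∏ dᵢ!)/(2^{sl(G)} ∏ mult(e)!)`; the total number of perfect matchings is
`(∑ dᵢ - 1)‼`; hence the configuration model produces `G` with probability
`(∏ dᵢ!)/((∑ dᵢ - 1)‼ · 2^{sl(G)} ∏ mult(e)!)`. -/
theorem configuration_model_probability (n : ℕ) (d : Fin n → ℕ) (hd : ∀ i, 0 < d i)
    (heven : Even (∑ i, d i)) (G : Multiset (Sym2 (Fin n)))
    (hdeg : ∀ i, mdegree G i = d i) :
    ((Nat.card {f : (Σ i : Fin n, Fin (d i)) → (Σ i : Fin n, Fin (d i)) //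
          IsPerfectMatching f ∧ Produces f G} : ℚ)
        = (∏ i, (d i).factorial : ℚ) /
            (2 ^ selfLoops G * ∏ e ∈ G.toFinset, (G.count e).factorial)) ∧
    ((Nat.card {f : (Σ i : Fin n, Fin (d i)) → (Σ i : Fin n, Fin (d i)) //
          IsPerfectMatching f} : ℚ)
        = Nat.doubleFactorial (∑ i, d i - 1)) ∧
    ((Nat.card {f : (Σ i : Fin n, Fin (d i)) → (Σ i : Fin n, Fin (d i)) //
          IsPerfectMatching f ∧ Produces f G} : ℚ) /
        (Nat.card {f : (Σ i : Fin n, Fin (d i)) → (Σ i : Fin n, Fin (d i)) //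
          IsPerfectMatching f} : ℚ)
        = (∏ i, (d i).factorial : ℚ) /
            (Nat.doubleFactorial (∑ i, d i - 1) * 2 ^ selfLoops G *
              ∏ e ∈ G.toFinset, (G.count e).factorial)) :=
  configuration_model_probability_general n d heven G hdeg
end

section
/- Define, for 0 < β < 1, θ > −β, and p ≥ 0, the Mittag-Leffler moment m(β,θ,p) = Γ(θ+1)Γ(θ/β+p+1)/(Γ(θ/β+1)Γ(θ+pβ+1)). Then for α ∈ (1,2), integers n ≥ 0, s ≥ 1, and all p ≥ 0, the identity m(1−1/α, (nα+s−1)/α, p) = m(1−1/α, ((n+1)α+s−1)/α, p) · E[B^p] holds, where B ∼ Beta(((n+1)α+s−2)/(α−1), 1/(α−1)) so that E[B^p] = Γ(((n+1)α+s−1)/(α−1))Γ(((n+1)α+s−2)/(α−1)+p)/(Γ(((n+1)α+s−2)/(α−1))Γ(((n+1)α+s−1)/(α−1)+p)). -/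
/-- The `p`-th moment of the generalized Mittag-Leffler distribution `ML(β, θ)`:
`m(β,θ,p) = Γ(θ+1)Γ(θ/β+p+1) / (Γ(θ/β+1)Γ(θ+pβ+1))`. -/
noncomputable def mlMoment (β θ p : ℝ) : ℝ :=
  Real.Gamma (θ + 1) * Real.Gamma (θ / β + p + 1) /
    (Real.Gamma (θ / β + 1) * Real.Gamma (θ + p * β + 1))

lemma key (α t p : ℝ) (hα : 1 < α) (ht : 0 ≤ t) (hp : 0 ≤ p) :
    mlMoment (1 - 1 / α) (t / α) p
      = mlMoment (1 - 1 / α) ((t + α) / α) p *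
          (Real.Gamma ((t + α) / (α - 1)) * Real.Gamma ((t + α - 1) / (α - 1) + p) /
            (Real.Gamma ((t + α - 1) / (α - 1)) * Real.Gamma ((t + α) / (α - 1) + p))) := by
  have hα0 : (0:ℝ) < α := by linarith
  have hα0' : α ≠ 0 := ne_of_gt hα0
  have hα1 : (0:ℝ) < α - 1 := by linarith
  have hα1' : α - 1 ≠ 0 := ne_of_gt hα1
  unfold mlMoment
  rw [show t / α / (1 - 1 / α) = t / (α - 1) by field_simp,
      show (t + α) / α / (1 - 1 / α) = (t + α) / (α - 1) by field_simp,
      show p * (1 - 1 / α) = p * (α - 1) / α by field_simp,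
      show (t + α - 1) / (α - 1) + p = t / (α - 1) + p + 1 by field_simp; ring,
      show (t + α - 1) / (α - 1) = t / (α - 1) + 1 by field_simp; ring,
      show (t + α) / α + 1 = (t / α + 1) + 1 by field_simp,
      show (t + α) / (α - 1) + p + 1 = ((t + α) / (α - 1) + p) + 1 by ring,
      show (t + α) / α + p * (α - 1) / α + 1 = (t / α + p * (α - 1) / α + 1) + 1 by
        field_simp; ring]
  have h1 : (0:ℝ) < t / α + 1 := by positivity
  have h2 : (0:ℝ) < t / (α - 1) + p + 1 := by positivity
  have h3 : (0:ℝ) < t / (α - 1) + 1 := by positivity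
  have h4 : (0:ℝ) < t / α + p * (α - 1) / α + 1 := by positivity
  have h5 : (0:ℝ) < (t + α) / (α - 1) := by positivity
  have h6 : (0:ℝ) < (t + α) / (α - 1) + p := by positivity
  rw [Real.Gamma_add_one (ne_of_gt h1), Real.Gamma_add_one (ne_of_gt h4),
      Real.Gamma_add_one (ne_of_gt h6), Real.Gamma_add_one (ne_of_gt h5)]
  have g1 := (Real.Gamma_pos_of_pos h1).ne'
  have g2 := (Real.Gamma_pos_of_pos h2).ne'
  have g3 := (Real.Gamma_pos_of_pos h3).ne'
  have g4 := (Real.Gamma_pos_of_pos h4).ne'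
  have g5 := (Real.Gamma_pos_of_pos h5).ne'
  have g6 := (Real.Gamma_pos_of_pos h6).ne'
  field_simp
  ring

/-- Moment consistency of the Markov chain `(Rₙ)` in the line-breaking construction:
`Rₙ ~ ML(1-1/α, (nα+s-1)/α)` and `Rₙ = Rₙ₊₁ · B` with an independent
`B ~ Beta(((n+1)α+s-2)/(α-1), 1/(α-1))`, expressed at the level of `p`-th moments. -/
theorem lineBreaking_moment_identity (α : ℝ) (hα₁ : 1 < α) (hα₂ : α < 2)
    (n s : ℕ) (hs : 1 ≤ s) (p : ℝ) (hp : 0 ≤ p) :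
    mlMoment (1 - 1 / α) (((n : ℝ) * α + (s : ℝ) - 1) / α) p
      = mlMoment (1 - 1 / α) ((((n : ℝ) + 1) * α + (s : ℝ) - 1) / α) p *
          (Real.Gamma ((((n : ℝ) + 1) * α + (s : ℝ) - 1) / (α - 1)) *
              Real.Gamma ((((n : ℝ) + 1) * α + (s : ℝ) - 2) / (α - 1) + p) /
            (Real.Gamma ((((n : ℝ) + 1) * α + (s : ℝ) - 2) / (α - 1)) *
              Real.Gamma ((((n : ℝ) + 1) * α + (s : ℝ) - 1) / (α - 1) + p))) := by
  have ht : (0:ℝ) ≤ (n : ℝ) * α + (s : ℝ) - 1 := by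
    have h1 : (1:ℝ) ≤ (s:ℝ) := by exact_mod_cast hs
    have h2 : (0:ℝ) ≤ (n:ℝ) := Nat.cast_nonneg n
    nlinarith
  have := key α ((n : ℝ) * α + (s : ℝ) - 1) p hα₁ ht hp
  rw [show ((n : ℝ) + 1) * α + (s : ℝ) - 1 = ((n : ℝ) * α + (s : ℝ) - 1) + α by ring,
      show ((n : ℝ) + 1) * α + (s : ℝ) - 2 = ((n : ℝ) * α + (s : ℝ) - 1) + α - 1 by ring]
  exact this
end

section
/- Define m(β,θ,p) = Γ(θ+1)Γ(θ/β+p+1)/(Γ(θ/β+1)Γ(θ+pβ+1)) for 0 < β < 1, θ > −β, p ≥ 0. Then for α ∈ (1,2), γ > 0, and all p ≥ 0: m(1/α, γ/α, (α−1)p) · m(α−1, γ, p) = m(1−1/α, γ/α, p). (This is the moment identity showing that if R ∼ ML(1/α, γ/α) and R̄ ∼ ML(α−1, γ) are independent, then R^{α−1}·R̄ ∼ ML(1−1/α, γ/α).) -/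
/-- Moment identity showing that if `R ~ ML(1/α, γ/α)` and `R̄ ~ ML(α-1, γ)` are
independent, then `R^{α-1} · R̄ ~ ML(1-1/α, γ/α)`:
`m(1/α, γ/α, (α-1)p) · m(α-1, γ, p) = m(1-1/α, γ/α, p)`. -/
theorem ml_product_moment_identity (α : ℝ) (hα₁ : 1 < α) (hα₂ : α < 2)
    (γ : ℝ) (hγ : 0 < γ) (p : ℝ) (hp : 0 ≤ p) :
    mlMoment (1 / α) (γ / α) ((α - 1) * p) * mlMoment (α - 1) γ p
      = mlMoment (1 - 1 / α) (γ / α) p := by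
  have hα0 : (0:ℝ) < α := by linarith
  have hαne : α ≠ 0 := ne_of_gt hα0
  have hm1 : (0:ℝ) < α - 1 := by linarith
  have hm1ne : α - 1 ≠ 0 := ne_of_gt hm1
  have h1 : γ / α / (1 / α) = γ := by field_simp
  have h2 : γ / α / (1 - 1 / α) = γ / (α - 1) := by
    rw [div_div]
    congr 1
    field_simp
  have h3 : (α - 1) * p * (1 / α) = p * (1 - 1 / α) := by
    field_simp
  have G : ∀ x : ℝ, 0 < x → Real.Gamma (x + 1) ≠ 0 := fun x hx =>
    ne_of_gt (Real.Gamma_pos_of_pos (by linarith))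
  unfold mlMoment
  rw [h1, h2, h3]
  have g1 := G (γ / α) (by positivity)
  have g2 := G γ hγ
  have g3 := G (γ / (α - 1)) (by positivity)
  have g4 := G (γ / (α - 1) + p) (by positivity)
  have g5 := G (γ + (α - 1) * p) (by positivity)
  have g6 := G (γ + p * (α - 1)) (by positivity)
  have g7 := G (γ / α + p * (1 - 1 / α)) (by
    have : 0 < 1 - 1/α := by
      rw [sub_pos, div_lt_one hα0]; exact hα₁
    positivity)
  have e : γ + (α - 1) * p = γ + p * (α - 1) := by ring
  rw [e]
  field_simp
end
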